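/- arXiv:2412.00941 — 2 statements merged into one kernel-verified Lean document; each statement's English description precedes it below -/
import Mathlib

section
/- Consider the blind MDP with state space S = {s0, s1, bot, top} and action set A = {w, c}, with transitions: δ(s0,w) gives probability 1/2 to s0 and 1/2 to s1; δ(s1,w) = point mass at s1; δ(s0,c) = point mass at bot; δ(s1,c) = point mass at top; and bot and top are absorbing under both actions. Then for every probability distribution σ on A we have ReachProb(P_σ, top, s0) < 1, i.e., this blind MDP is not almost-sure winning for the reachability objective under memoryless policies. -/
open scoped BigOperators

/-- States of the example blind MDP. -/
inductive St | s0 | s1 | bot | top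
  deriving DecidableEq

instance : Fintype St := ⟨{St.s0, St.s1, St.bot, St.top}, fun x => by cases x <;> simp⟩

/-- Actions: wait and commit. -/
inductive Act | w | c
  deriving DecidableEq

instance : Fintype Act := ⟨{Act.w, Act.c}, fun x => by cases x <;> simp⟩

/-- Iterates whose supremum is the reachability probability. -/
noncomputable def reachAux {S : Type*} [Fintype S] [DecidableEq S]
    (P : S → S → ℝ) (t : S) : ℕ → S → ℝ
  | 0, x => if x = t then 1 else 0
  | n + 1, x => if x = t then 1 else ∑ y, P x y * reachAux P t n y

/-- Reachability probability of target `t` starting from `s` in the Markov chain `P`. -/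
noncomputable def ReachProb {S : Type*} [Fintype S] [DecidableEq S]
    (P : S → S → ℝ) (t s : S) : ℝ :=
  ⨆ n : ℕ, reachAux P t n s

/-- Transition function of the example blind MDP. -/
noncomputable def d : St → Act → St → ℝ
  | St.s0, Act.w, St.s0 => 1/2
  | St.s0, Act.w, St.s1 => 1/2
  | St.s1, Act.w, St.s1 => 1
  | St.s0, Act.c, St.bot => 1
  | St.s1, Act.c, St.top => 1
  | St.bot, _, St.bot => 1
  | St.top, _, St.top => 1
  | _, _, _ => 0

/-
A potential `v ≥ 0` with `v top ≥ 1` that is superharmonic off `top` dominates every iterate of the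
reachability recursion, hence the reachability probability. Write `p = σ w`. If `p < 1`, the
potential `s0 ↦ p / (2 - p)`, `s1 ↦ 1`, `bot ↦ 0`, `top ↦ 1` is harmonic at `s0` (waiting leads to `s1`
only half the time, committing at `s0` loses), so `ReachProb ≤ p / (2 - p) < 1`. If `p = 1` the chain
never commits and the potential vanishing off `top` shows `ReachProb = 0`.
-/

section Superharmonic

variable {S : Type*} [Fintype S] [DecidableEq S] {P : S → S → ℝ} {t : S} {v : S → ℝ}

lemma reachAux_le_of_superharmonic (hP : ∀ x y, 0 ≤ P x y) (hv : ∀ x, 0 ≤ v x) (ht : 1 ≤ v t)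
    (hsuper : ∀ x, x ≠ t → ∑ y, P x y * v y ≤ v x) (n : ℕ) (x : S) :
    reachAux P t n x ≤ v x := by
  induction n generalizing x with
  | zero =>
    unfold reachAux
    split_ifs with hx
    · exact hx ▸ ht
    · exact hv x
  | succ n ih =>
    unfold reachAux
    split_ifs with hx
    · exact hx ▸ ht
    · calc ∑ y, P x y * reachAux P t n y
          ≤ ∑ y, P x y * v y := by gcongr with y; exacts [hP x y, ih y]
        _ ≤ v x := hsuper x hx

lemma reachProb_le_of_superharmonic (hP : ∀ x y, 0 ≤ P x y) (hv : ∀ x, 0 ≤ v x) (ht : 1 ≤ v t)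
    (hsuper : ∀ x, x ≠ t → ∑ y, P x y * v y ≤ v x) (s : S) :
    ReachProb P t s ≤ v s :=
  ciSup_le fun n => reachAux_le_of_superharmonic hP hv ht hsuper n s

end Superharmonic

lemma Act.sum_eq (f : Act → ℝ) : ∑ a, f a = f Act.w + f Act.c := by
  rw [show (Finset.univ : Finset Act) = {Act.w, Act.c} from rfl, Finset.sum_pair (by decide)]

lemma St.sum_eq (f : St → ℝ) : ∑ y, f y = f St.s0 + f St.s1 + f St.bot + f St.top := by
  rw [show (Finset.univ : Finset St) = {St.s0, St.s1, St.bot, St.top} from rfl]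
  simp only [Finset.sum_insert, Finset.mem_insert, Finset.mem_singleton, reduceCtorEq, or_self,
    not_false_eq_true, Finset.sum_singleton]
  ring

lemma d_nonneg (s : St) (a : Act) (s' : St) : 0 ≤ d s a s' := by
  cases s <;> cases a <;> cases s' <;> norm_num [d]

def potential (a b : ℝ) : St → ℝ
  | St.s0 => a
  | St.s1 => b
  | St.bot => 0
  | St.top => 1

lemma reachProb_le_of_potential (σ : Act → ℝ) (hσ0 : ∀ a, 0 ≤ σ a) {a b : ℝ} (ha : 0 ≤ a)
    (hb : 0 ≤ b) (hs0 : σ Act.w / 2 * (a + b) ≤ a) (hs1 : σ Act.w * b + σ Act.c ≤ b) :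
    ReachProb (fun s s' => ∑ a, σ a * d s a s') St.top St.s0 ≤ a := by
  refine reachProb_le_of_superharmonic (v := potential a b)
    (fun x y => Finset.sum_nonneg fun a _ => mul_nonneg (hσ0 a) (d_nonneg x a y))
    (fun x => by cases x <;> simp [potential, ha, hb]) (by simp [potential]) ?_ St.s0
  intro x hx
  cases x
  · simp only [St.sum_eq, Act.sum_eq, d, potential]; linarith
  · simp only [St.sum_eq, Act.sum_eq, d, potential]; linarith
  · simp [St.sum_eq, Act.sum_eq, d, potential]
  · exact absurd rfl hx

/-- The example blind MDP is not almost-sure winning under memoryless policies: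
for every distribution `σ` on actions, the reachability probability
of `top` from `s0` is strictly less than `1`. -/
theorem not_almostSure_example (σ : Act → ℝ) (hσ0 : ∀ a, 0 ≤ σ a)
    (hσ1 : (∑ a, σ a) = 1) :
    ReachProb (fun s s' => ∑ a, σ a * d s a s') St.top St.s0 < 1 := by
  have hpq : σ Act.w + σ Act.c = 1 := by rwa [Act.sum_eq] at hσ1
  have hp0 := hσ0 Act.w
  rcases (show σ Act.w ≤ 1 by linarith [hσ0 Act.c]).lt_or_eq with hp | hp
  · have h2p : 0 < 2 - σ Act.w := by linarith
    have hs0 : σ Act.w / 2 * (σ Act.w / (2 - σ Act.w) + 1) = σ Act.w / (2 - σ Act.w) := by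
      field_simp; ring
    calc ReachProb _ St.top St.s0 ≤ σ Act.w / (2 - σ Act.w) :=
          reachProb_le_of_potential σ hσ0 (by positivity) zero_le_one hs0.le (by linarith)
      _ < 1 := (div_lt_one h2p).mpr (by linarith)
  · calc ReachProb _ St.top St.s0 ≤ 0 :=
          reachProb_le_of_potential σ hσ0 le_rfl le_rfl (by simp) (by linarith)
      _ < 1 := zero_lt_one
end

section
/- Let (S, A, δ, Z, o, s₀) be a POMDP with target ⊤ ∈ S. Define the blind MDP on the same state space S with action set A × Z, initial state s₀, and transitions δ̃(s,(a,z)) := δ(s,a) if o(s) = z and the point mass at s otherwise. Then the reachability value under memoryless policies of the POMDP equals that of the blind MDP: ⨆ over memoryless policies σ : Z → Δ(A) of ReachProb(P_σ, ⊤, s₀) = ⨆ over probability distributions τ on A × Z of ReachProb(P̃_τ, ⊤, s₀), where P̃_τ(s,s') := Σ_{(a,z)} τ(a,z) · δ̃(s,(a,z))(s'). -/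
/-!
Under a blind policy `τ` on `A × Z`, a step from `s` plays an action meant for the observation
`o s` with probability `w = ∑ a, τ (a, o s)` and otherwise leaves the state unchanged. So the blind
chain is the POMDP chain of the conditional policy `τ (· | z)`, made lazy with holding probability
`1 - w`. Since the reachability probability is the least nonnegative superharmonic function that
is `1` at the target, a lazy chain reaches the target with at most the probability of the original
one, and with the same probability when `w > 0` everywhere. Conversely, a memoryless policy `σ` is
realised by the blind policy `σ z a / |Z|`, whose chain is the POMDP chain of `σ` made lazy with
constant holding probability `1 - 1 / |Z|`.
-/

open scoped BigOperators

/-- Transition function of the blind MDP associated with a POMDP: action `(a, z)`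
behaves like `a` on states with observation `z` and is a self-loop elsewhere. -/
noncomputable def blindTrans {S A Z : Type*} [DecidableEq S] [DecidableEq Z]
    (δ : S → A → S → ℝ) (o : S → Z) : S → A × Z → S → ℝ :=
  fun s p s' => if o s = p.2 then δ s p.1 s' else if s' = s then 1 else 0


open Finset Filter Topology Matrix

section Reachability

variable {S : Type*} [Fintype S] [DecidableEq S] {P : S → S → ℝ} {t : S}

lemma reachAux_nonneg (hP : ∀ x y, 0 ≤ P x y) (n : ℕ) (x : S) : 0 ≤ reachAux P t n x := by
  induction n generalizing x with
  | zero => unfold reachAux; split <;> norm_num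
  | succ n ih =>
    unfold reachAux; split
    · exact zero_le_one
    · exact sum_nonneg fun y _ => mul_nonneg (hP x y) (ih y)

lemma reachAux_le_one (hP : P ∈ rowStochastic ℝ S) (n : ℕ) (x : S) : reachAux P t n x ≤ 1 := by
  induction n generalizing x with
  | zero => unfold reachAux; split <;> norm_num
  | succ n ih =>
    unfold reachAux; split
    · exact le_rfl
    · calc ∑ y, P x y * reachAux P t n y ≤ ∑ y, P x y :=
            sum_le_sum fun y _ => mul_le_of_le_one_right (nonneg_of_mem_rowStochastic hP) (ih y)
        _ = 1 := sum_row_of_mem_rowStochastic hP x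

lemma reachAux_le_succ (hP : ∀ x y, 0 ≤ P x y) (n : ℕ) (x : S) :
    reachAux P t n x ≤ reachAux P t (n + 1) x := by
  induction n generalizing x with
  | zero =>
    unfold reachAux; split
    · exact le_rfl
    · exact sum_nonneg fun y _ => mul_nonneg (hP x y) (reachAux_nonneg hP 0 y)
  | succ n ih =>
    unfold reachAux; split
    · exact le_rfl
    · exact sum_le_sum fun y _ => mul_le_mul_of_nonneg_left (ih y) (hP x y)

lemma tendsto_reachAux (hP : P ∈ rowStochastic ℝ S) (x : S) :
    Tendsto (fun n => reachAux P t n x) atTop (𝓝 (ReachProb P t x)) :=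
  tendsto_atTop_ciSup
    (monotone_nat_of_le_succ
      (reachAux_le_succ (fun _ _ => nonneg_of_mem_rowStochastic hP) · x))
    ⟨1, by rintro _ ⟨n, rfl⟩; exact reachAux_le_one hP n x⟩

lemma reachProb_self : ReachProb P t t = 1 := by
  have h : ∀ n, reachAux P t n t = 1 := by rintro (_ | _) <;> simp [reachAux]
  simp [ReachProb, h]

lemma reachProb_nonneg (hP : P ∈ rowStochastic ℝ S) (x : S) : 0 ≤ ReachProb P t x :=
  ge_of_tendsto' (tendsto_reachAux hP x)
    (reachAux_nonneg (fun _ _ => nonneg_of_mem_rowStochastic hP) · x)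

lemma reachProb_eq_sum (hP : P ∈ rowStochastic ℝ S) {x : S} (hx : x ≠ t) :
    ReachProb P t x = ∑ y, P x y * ReachProb P t y := by
  have hsucc : (fun n => reachAux P t (n + 1) x) = fun n => ∑ y, P x y * reachAux P t n y := by
    funext n; simp [reachAux, hx]
  refine tendsto_nhds_unique ((tendsto_reachAux hP x).comp (tendsto_add_atTop_nat 1)) ?_
  rw [Function.comp_def, hsucc]
  exact tendsto_finsetSum _ fun y _ => (tendsto_reachAux hP y).const_mul (P x y)

lemma reachProb_le_of_superharmonic_s2 (hP : ∀ x y, 0 ≤ P x y) {G : S → ℝ} (hG0 : ∀ y, 0 ≤ G y)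
    (hGt : 1 ≤ G t) (hG : ∀ x, x ≠ t → ∑ y, P x y * G y ≤ G x) (x : S) :
    ReachProb P t x ≤ G x := by
  have key : ∀ n x, reachAux P t n x ≤ G x := by
    intro n
    induction n with
    | zero => intro x; unfold reachAux; split <;> simp_all
    | succ n ih =>
      intro x; unfold reachAux; split
      · simp_all
      · next hx =>
        exact (sum_le_sum fun y _ => mul_le_mul_of_nonneg_left (ih y) (hP x y)).trans (hG x hx)
  exact ciSup_le fun n => key n x

end Reachability

section LazyChain

variable {S : Type*} [DecidableEq S]

def lazyChain (w : S → ℝ) (P : S → S → ℝ) : S → S → ℝ :=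
  fun x y => w x * P x y + (1 - w x) * if y = x then 1 else 0

variable [Fintype S] {P : S → S → ℝ} {t : S} {w : S → ℝ}

lemma sum_lazyChain_mul (G : S → ℝ) (x : S) :
    ∑ y, lazyChain w P x y * G y = w x * ∑ y, P x y * G y + (1 - w x) * G x := by
  simp only [lazyChain, add_mul, sum_add_distrib, mul_assoc, ← mul_sum, ite_mul, one_mul,
    zero_mul, sum_ite_eq', mem_univ, if_true]

lemma lazyChain_mem_rowStochastic (hP : P ∈ rowStochastic ℝ S) (hw : ∀ x, w x ∈ Set.Icc 0 1) :
    lazyChain w P ∈ rowStochastic ℝ S := by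
  refine mem_rowStochastic_iff_sum.2 ⟨fun x y => ?_, fun x => ?_⟩
  · have hstay : (0 : ℝ) ≤ if y = x then 1 else 0 := by split <;> norm_num
    exact add_nonneg (mul_nonneg (hw x).1 (nonneg_of_mem_rowStochastic hP))
      (mul_nonneg (sub_nonneg.2 (hw x).2) hstay)
  · simpa [sum_row_of_mem_rowStochastic hP x] using sum_lazyChain_mul (P := P) (w := w) 1 x

lemma reachProb_lazyChain_le (hP : P ∈ rowStochastic ℝ S) (hw : ∀ x, w x ∈ Set.Icc 0 1)
    (x : S) : ReachProb (lazyChain w P) t x ≤ ReachProb P t x := by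
  refine reachProb_le_of_superharmonic_s2 (fun _ _ => nonneg_of_mem_rowStochastic
    (lazyChain_mem_rowStochastic hP hw)) (reachProb_nonneg hP) reachProb_self.ge
    (fun y hy => ?_) x
  rw [sum_lazyChain_mul, ← reachProb_eq_sum hP hy]
  linarith

lemma reachProb_lazyChain (hP : P ∈ rowStochastic ℝ S) (hw : ∀ x, w x ∈ Set.Ioc 0 1) (x : S) :
    ReachProb (lazyChain w P) t x = ReachProb P t x := by
  have hw' : ∀ x, w x ∈ Set.Icc 0 1 := fun x => Set.Ioc_subset_Icc_self (hw x)
  have hQ := lazyChain_mem_rowStochastic hP hw'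
  refine (reachProb_lazyChain_le hP hw' x).antisymm
    (reachProb_le_of_superharmonic_s2 (fun _ _ => nonneg_of_mem_rowStochastic hP)
      (reachProb_nonneg hQ) reachProb_self.ge (fun y hy => ?_) x)
  set G := ReachProb (lazyChain w P) t
  have hfix := reachProb_eq_sum hQ hy
  rw [sum_lazyChain_mul] at hfix
  have hmul : w y * (∑ z, P y z * G z - G y) = 0 := by linarith
  exact (sub_eq_zero.1 ((mul_eq_zero.1 hmul).resolve_left (hw y).1.ne')).le

end LazyChain

section Blind

variable {S A Z : Type*} [Fintype A]

noncomputable def pomdpChain (δ : S → A → S → ℝ) (o : S → Z) (σ : Z → A → ℝ) : S → S → ℝ :=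
  fun s s' => ∑ a, σ (o s) a * δ s a s'

noncomputable def blindChain [Fintype Z] [DecidableEq S] [DecidableEq Z] (δ : S → A → S → ℝ)
    (o : S → Z) (τ : A × Z → ℝ) : S → S → ℝ :=
  fun s s' => ∑ p : A × Z, τ p * blindTrans δ o s p s'

variable {δ : S → A → S → ℝ} {o : S → Z}

lemma pomdpChain_mem_rowStochastic [Fintype S] [DecidableEq S]
    (hδ : ∀ s a, δ s a ∈ stdSimplex ℝ S) {σ : Z → A → ℝ} (hσ : ∀ z, σ z ∈ stdSimplex ℝ A) :
    pomdpChain δ o σ ∈ rowStochastic ℝ S := by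
  refine mem_rowStochastic_iff_sum.2 ⟨fun s s' => ?_, fun s => ?_⟩
  · exact sum_nonneg fun a _ => mul_nonneg ((hσ _).1 a) ((hδ s a).1 s')
  · simp only [pomdpChain]
    rw [sum_comm]
    simp only [← mul_sum, (hδ _ _).2, mul_one, (hσ _).2]

variable [Fintype Z] [DecidableEq S] [DecidableEq Z]

lemma sum_mul_blindTrans {τ : A × Z → ℝ} (hτ : ∑ p, τ p = 1) (s s' : S) :
    ∑ p : A × Z, τ p * blindTrans δ o s p s' =
      ∑ a, τ (a, o s) * δ s a s' + (1 - ∑ a, τ (a, o s)) * if s' = s then 1 else 0 := by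
  set e : ℝ := if s' = s then 1 else 0
  have hsplit : ∀ p : A × Z, τ p * blindTrans δ o s p s' =
      (if p.2 = o s then τ p * (δ s p.1 s' - e) else 0) + τ p * e := by
    rintro ⟨a, z⟩
    by_cases h : z = o s
    · simp only [blindTrans, h, if_true]; ring
    · simp [blindTrans, h, Ne.symm h, e]
  rw [sum_congr rfl fun p _ => hsplit p, sum_add_distrib, ← sum_mul, hτ,
    Fintype.sum_prod_type_right]
  rw [sum_eq_single (o s) (fun z _ hz => by simp [hz]) (by simp)]
  simp only [if_true, mul_sub, sum_sub_distrib, ← sum_mul]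
  ring

lemma blindChain_eq_lazyChain {τ : A × Z → ℝ} (hτ : ∑ p, τ p = 1) {σ : Z → A → ℝ}
    (hστ : ∀ a z, τ (a, z) = (∑ b, τ (b, z)) * σ z a) :
    blindChain δ o τ = lazyChain (fun s => ∑ a, τ (a, o s)) (pomdpChain δ o σ) := by
  ext s s'
  simp only [blindChain, sum_mul_blindTrans hτ, lazyChain, pomdpChain, mul_sum]
  congr 1
  exact sum_congr rfl fun a _ => by rw [hστ a (o s), mul_assoc]

end Blind

section CondPolicy

variable {A Z : Type*} [Fintype A] [Fintype Z]

/-- The conditional law of the action given the observation; where the observation has mass zero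
any distribution would do, and the action marginal is taken. -/
noncomputable def condPolicy (τ : A × Z → ℝ) (z : Z) (a : A) : ℝ :=
  if ∑ b, τ (b, z) = 0 then ∑ y, τ (a, y) else τ (a, z) / ∑ b, τ (b, z)

lemma condPolicy_mem_stdSimplex {τ : A × Z → ℝ} (hτ : τ ∈ stdSimplex ℝ (A × Z)) (z : Z) :
    condPolicy τ z ∈ stdSimplex ℝ A := by
  by_cases hz : ∑ b, τ (b, z) = 0
  · refine ⟨fun a => ?_, ?_⟩
    · simp only [condPolicy, hz, if_true]
      exact sum_nonneg fun y _ => hτ.1 _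
    · simp only [condPolicy, hz, if_true]
      rw [← Fintype.sum_prod_type, hτ.2]
  · refine ⟨fun a => ?_, ?_⟩
    · simp only [condPolicy, hz, if_false]
      exact div_nonneg (hτ.1 _) (sum_nonneg fun b _ => hτ.1 _)
    · simp only [condPolicy, hz, if_false, ← sum_div]
      exact div_self hz

lemma sum_mul_condPolicy {τ : A × Z → ℝ} (hτ : ∀ p, 0 ≤ τ p) (a : A) (z : Z) :
    (∑ b, τ (b, z)) * condPolicy τ z a = τ (a, z) := by
  by_cases hz : ∑ b, τ (b, z) = 0
  · rw [hz, zero_mul, eq_comm]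
    exact (sum_eq_zero_iff_of_nonneg fun b _ => hτ (b, z)).1 hz a (mem_univ a)
  · simp only [condPolicy, hz, if_false]
    field_simp

end CondPolicy

section Policies

variable {S A Z : Type*} [Fintype S] [DecidableEq S] [Fintype A] [Fintype Z] [DecidableEq Z]
  {δ : S → A → S → ℝ} {o : S → Z}

lemma exists_reachProb_blindChain_eq [Nonempty Z] (hδ : ∀ s a, δ s a ∈ stdSimplex ℝ S)
    {σ : Z → A → ℝ} (hσ : ∀ z, σ z ∈ stdSimplex ℝ A) (t s : S) :
    ∃ τ ∈ stdSimplex ℝ (A × Z),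
      ReachProb (blindChain δ o τ) t s = ReachProb (pomdpChain δ o σ) t s := by
  set c : ℝ := (Fintype.card Z : ℝ)⁻¹
  have hc : c ∈ Set.Ioc 0 1 :=
    ⟨by positivity, inv_le_one_of_one_le₀ (by exact_mod_cast Fintype.card_pos)⟩
  have hmarg : ∀ z, ∑ a, σ z a * c = c := fun z => by rw [← sum_mul, (hσ z).2, one_mul]
  have hτ : (fun p : A × Z => σ p.2 p.1 * c) ∈ stdSimplex ℝ (A × Z) := by
    refine ⟨fun p => mul_nonneg ((hσ _).1 _) hc.1.le, ?_⟩
    rw [Fintype.sum_prod_type_right]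
    simp only [hmarg, sum_const, card_univ, nsmul_eq_mul]
    exact mul_inv_cancel₀ (by positivity)
  refine ⟨_, hτ, ?_⟩
  rw [blindChain_eq_lazyChain hτ.2 (σ := σ) fun a z => by simp only [hmarg]; ring]
  simp only [hmarg]
  exact reachProb_lazyChain (pomdpChain_mem_rowStochastic hδ hσ) (fun _ => hc) s

lemma reachProb_blindChain_le (hδ : ∀ s a, δ s a ∈ stdSimplex ℝ S) {τ : A × Z → ℝ}
    (hτ : τ ∈ stdSimplex ℝ (A × Z)) (t s : S) :
    ReachProb (blindChain δ o τ) t s ≤ ReachProb (pomdpChain δ o (condPolicy τ)) t s := by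
  have hw : ∀ x, ∑ a, τ (a, o x) ∈ Set.Icc 0 1 := fun x =>
    ⟨sum_nonneg fun a _ => hτ.1 _, by
      calc ∑ a, τ (a, o x) ≤ ∑ z, ∑ a, τ (a, z) :=
            single_le_sum (f := fun z => ∑ a, τ (a, z)) (fun z _ => sum_nonneg fun a _ => hτ.1 _)
              (mem_univ (o x))
        _ = 1 := by rw [← Fintype.sum_prod_type_right, hτ.2]⟩
  rw [blindChain_eq_lazyChain hτ.2 fun a z => (sum_mul_condPolicy hτ.1 a z).symm]
  exact reachProb_lazyChain_le
    (pomdpChain_mem_rowStochastic hδ (condPolicy_mem_stdSimplex hτ)) hw s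

end Policies

theorem pomdp_eq_blind_value_general
    {S A Z : Type*} [Fintype S] [Fintype A] [Fintype Z]
    [DecidableEq S] [DecidableEq Z]
    (δ : S → A → S → ℝ)
    (hδ : ∀ s a, (∀ s', 0 ≤ δ s a s') ∧ (∑ s', δ s a s') = 1)
    (o : S → Z) (s₀ top : S) :
    sSup {x : ℝ | ∃ σ : Z → A → ℝ, (∀ z a, 0 ≤ σ z a) ∧ (∀ z, (∑ a, σ z a) = 1) ∧
        x = ReachProb (fun s s' => ∑ a, σ (o s) a * δ s a s') top s₀} =
    sSup {x : ℝ | ∃ τ : A × Z → ℝ, (∀ p, 0 ≤ τ p) ∧ (∑ p, τ p) = 1 ∧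
        x = ReachProb (fun s s' => ∑ p : A × Z, τ p * blindTrans δ o s p s') top s₀} := by
  have : Nonempty Z := ⟨o s₀⟩
  apply csSup_eq_csSup_of_forall_exists_le
  · rintro _ ⟨σ, hσ0, hσ1, rfl⟩
    obtain ⟨τ, hτ, heq⟩ :=
      exists_reachProb_blindChain_eq (o := o) hδ (fun z => ⟨hσ0 z, hσ1 z⟩) top s₀
    exact ⟨_, ⟨τ, hτ.1, hτ.2, rfl⟩, heq.ge⟩
  · rintro _ ⟨τ, hτ0, hτ1, rfl⟩
    have hσ := condPolicy_mem_stdSimplex ⟨hτ0, hτ1⟩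
    exact ⟨_, ⟨condPolicy τ, fun z => (hσ z).1, fun z => (hσ z).2, rfl⟩,
      reachProb_blindChain_le hδ ⟨hτ0, hτ1⟩ top s₀⟩

/-- The reachability value of the POMDP under memoryless policies equals the
reachability value of the associated blind MDP under memoryless policies. -/
theorem pomdp_eq_blind_value
    {S A Z : Type*} [Fintype S] [Fintype A] [Fintype Z]
    [DecidableEq S] [DecidableEq Z]
    [Nonempty S] [Nonempty A] [Nonempty Z]
    (δ : S → A → S → ℝ)
    (hδ : ∀ s a, (∀ s', 0 ≤ δ s a s') ∧ (∑ s', δ s a s') = 1)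
    (o : S → Z) (s₀ top : S) :
    sSup {x : ℝ | ∃ σ : Z → A → ℝ, (∀ z a, 0 ≤ σ z a) ∧ (∀ z, (∑ a, σ z a) = 1) ∧
        x = ReachProb (fun s s' => ∑ a, σ (o s) a * δ s a s') top s₀} =
    sSup {x : ℝ | ∃ τ : A × Z → ℝ, (∀ p, 0 ≤ τ p) ∧ (∑ p, τ p) = 1 ∧
        x = ReachProb (fun s s' => ∑ p : A × Z, τ p * blindTrans δ o s p s') top s₀} :=
  pomdp_eq_blind_value_general δ hδ o s₀ top
end
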